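/- arXiv:2009.04013 — 2 statements merged into one kernel-verified Lean document; each statement's English description precedes it below -/
import Mathlib

section
/- Let Y be a real-valued random variable, E an event, and Z ~ Lap(b) independent of (Y, E). Suppose conditional on E and on its complement, the possible values of Y lie within an interval of length at most Δ₁ (i.e., |Y(ω) − Y(ω')| ≤ Δ₁ whenever the conditioning variables agree on a common set), and additionally the conditioning events satisfy a likelihood-ratio bound: P(V = v | E) ≤ e^{λ} P(V = v | E^c) for an auxiliary variable V with Y measurable given V up to change Δ₁. If b ≥ Δ₁/(ε − λ) with λ < ε, then for all measurable T, P(Y + Z ∈ T | E) ≤ e^ε P(Y + Z ∈ T | E^c). -/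
/-! Translating the Laplace density by `u` changes it by a factor of at most `exp (|u| / b)`.
Decompose `Ω` into the fibres of `V`: on a fibre `Y` moves by at most `Δ₁`, so the probability
that `Y + Z ∈ T` varies by a factor of at most `exp (Δ₁ / b)`, and the mass of the fibre under
`E` is at most `exp lam` times its mass under `Eᶜ`. Summing over fibres gives the factor
`exp (Δ₁ / b + lam) ≤ exp ε`. -/

open MeasureTheory ProbabilityTheory

noncomputable def laplaceMeasure (b : ℝ) : Measure ℝ :=
  volume.withDensity (fun z => ENNReal.ofReal ((1 / (2 * b)) * Real.exp (-|z| / b)))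

open scoped ENNReal

instance (b : ℝ) : SFinite (laplaceMeasure b) := by
  unfold laplaceMeasure
  infer_instance

section Laplace

variable {b : ℝ}

theorem laplace_density_add_le (hb : 0 ≤ b) (z u : ℝ) :
    1 / (2 * b) * Real.exp (-|z + u| / b) ≤
      Real.exp (|u| / b) * (1 / (2 * b) * Real.exp (-|z| / b)) := by
  rw [mul_left_comm, ← Real.exp_add, ← add_div]
  gcongr
  have := abs_add_le (z + u) (-u)
  rw [add_neg_cancel_right, abs_neg] at this
  linarith

theorem laplaceMeasure_le_mul_preimage_add (hb : 0 ≤ b) {A : Set ℝ} (hA : MeasurableSet A)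
    (u : ℝ) :
    laplaceMeasure b A ≤
      ENNReal.ofReal (Real.exp (|u| / b)) * laplaceMeasure b ((· + u) ⁻¹' A) := by
  have hd : Measurable fun z : ℝ => ENNReal.ofReal (1 / (2 * b) * Real.exp (-|z| / b)) := by
    fun_prop
  rw [laplaceMeasure, withDensity_apply _ hA, withDensity_apply _ (measurable_add_const u hA),
    ← (measurePreserving_add_right volume u).setLIntegral_comp_preimage hA hd,
    ← lintegral_const_mul' _ _ ENNReal.ofReal_ne_top]
  refine lintegral_mono fun z => ?_
  rw [← ENNReal.ofReal_mul (Real.exp_nonneg _)]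
  exact ENNReal.ofReal_le_ofReal (laplace_density_add_le hb z u)

theorem laplaceMeasure_preimage_const_add_le (hb : 0 ≤ b) {T : Set ℝ} (hT : MeasurableSet T)
    (s t : ℝ) :
    laplaceMeasure b ((s + ·) ⁻¹' T) ≤
      ENNReal.ofReal (Real.exp (|s - t| / b)) * laplaceMeasure b ((t + ·) ⁻¹' T) := by
  have hshift : (· + (t - s)) ⁻¹' ((s + ·) ⁻¹' T) = (t + ·) ⁻¹' T := by
    ext z
    simp only [Set.mem_preimage, show s + (z + (t - s)) = t + z by ring]
  rw [abs_sub_comm, ← hshift]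
  exact laplaceMeasure_le_mul_preimage_add hb (measurable_const_add s hT) (t - s)

end Laplace

theorem MeasureTheory.Measure.conv_map_apply {Ω M : Type*} [MeasurableSpace Ω] [AddMonoid M]
    [MeasurableSpace M] [MeasurableAdd₂ M] {μ : Measure Ω} {ν : Measure M} [SFinite ν]
    {Y : Ω → M} (hY : Measurable Y) {T : Set M} (hT : MeasurableSet T) :
    (μ.map Y ∗ ν) T = ∫⁻ ω, ν ((Y ω + ·) ⁻¹' T) ∂μ := by
  have hS : MeasurableSet ((fun p : M × M => p.1 + p.2) ⁻¹' T) := measurable_add hT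
  rw [Measure.conv, Measure.map_apply measurable_add hT, Measure.prod_apply hS]
  exact lintegral_map (measurable_measure_prodMk_left hS) hY

section Fiberwise

variable {Ω α : Type*} [MeasurableSpace Ω] {μ ν : Measure Ω} {f : Ω → ℝ≥0∞} {c k : ℝ≥0∞}

theorem setLIntegral_le_mul_of_le_mul {S : Set Ω} (hS : MeasurableSet S) (hc0 : c ≠ 0)
    (hctop : c ≠ ⊤) (hosc : ∀ ω ∈ S, ∀ ω' ∈ S, f ω ≤ c * f ω') (hμν : μ S ≤ k * ν S) :
    ∫⁻ ω in S, f ω ∂μ ≤ c * k * ∫⁻ ω in S, f ω ∂ν := by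
  set m := ⨅ ω' ∈ S, f ω'
  have hupper : ∀ ω ∈ S, f ω ≤ c * m := fun ω hω => by
    simp only [m, ENNReal.mul_iInf_of_ne hc0 hctop]
    exact le_iInf₂ (hosc ω hω)
  have hlower : m * ν S ≤ ∫⁻ ω in S, f ω ∂ν := by
    rw [← setLIntegral_const]
    exact setLIntegral_mono' hS fun ω hω => iInf₂_le ω hω
  calc ∫⁻ ω in S, f ω ∂μ ≤ ∫⁻ _ in S, c * m ∂μ := setLIntegral_mono' hS hupper
    _ = c * m * μ S := setLIntegral_const _ _
    _ ≤ c * m * (k * ν S) := by gcongr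
    _ = c * k * (m * ν S) := by ring
    _ ≤ c * k * ∫⁻ ω in S, f ω ∂ν := by gcongr

variable [MeasurableSpace α] [Countable α] [MeasurableSingletonClass α] {V : Ω → α}

theorem lintegral_eq_tsum_setLIntegral_fiber (hV : Measurable V) (μ : Measure Ω)
    (f : Ω → ℝ≥0∞) :
    ∫⁻ ω, f ω ∂μ = ∑' v, ∫⁻ ω in V ⁻¹' {v}, f ω ∂μ := by
  rw [← lintegral_iUnion (fun v => hV (measurableSet_singleton v)) (pairwise_disjoint_fiber V),
    ← Set.preimage_iUnion, Set.iUnion_of_singleton, Set.preimage_univ, setLIntegral_univ]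

theorem lintegral_le_mul_of_fiberwise_le_mul (hV : Measurable V) (hc0 : c ≠ 0) (hctop : c ≠ ⊤)
    (hosc : ∀ ω ω', V ω = V ω' → f ω ≤ c * f ω')
    (hμν : ∀ v, μ (V ⁻¹' {v}) ≤ k * ν (V ⁻¹' {v})) :
    ∫⁻ ω, f ω ∂μ ≤ c * k * ∫⁻ ω, f ω ∂ν := by
  rw [lintegral_eq_tsum_setLIntegral_fiber hV, lintegral_eq_tsum_setLIntegral_fiber hV,
    ← ENNReal.tsum_mul_left]
  refine ENNReal.tsum_le_tsum fun v => setLIntegral_le_mul_of_le_mul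
    (hV (measurableSet_singleton v)) hc0 hctop (fun ω hω ω' hω' => ?_) (hμν v)
  exact hosc ω ω' (hω.trans hω'.symm)

end Fiberwise

theorem markov_quilt_privacy_general
    {Ω α : Type*} [MeasurableSpace Ω] [MeasurableSpace α] [Countable α]
    [MeasurableSingletonClass α]
    (P : Measure Ω)
    (Y : Ω → ℝ) (hY : Measurable Y) (V : Ω → α) (hV : Measurable V)
    (E : Set Ω)
    (Δ₁ lam ε b : ℝ) (hlamε : lam < ε)
    (hb : b ≥ Δ₁ / (ε - lam)) (hbpos : 0 < b)
    (hsens : ∀ ω ω', V ω = V ω' → |Y ω - Y ω'| ≤ Δ₁)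
    (hratio : ∀ v : α, P[|E] (V ⁻¹' {v}) ≤
      ENNReal.ofReal (Real.exp lam) * P[|Eᶜ] (V ⁻¹' {v})) :
    ∀ T : Set ℝ, MeasurableSet T →
      (Measure.conv ((P[|E]).map Y) (laplaceMeasure b)) T ≤
        ENNReal.ofReal (Real.exp ε) *
          (Measure.conv ((P[|Eᶜ]).map Y) (laplaceMeasure b)) T := by
  intro T hT
  have hΔ₁b : Δ₁ / b ≤ ε - lam := by
    rw [ge_iff_le, div_le_iff₀ (sub_pos.mpr hlamε)] at hb
    rwa [div_le_iff₀ hbpos, mul_comm]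
  have hosc : ∀ ω ω', V ω = V ω' → laplaceMeasure b ((Y ω + ·) ⁻¹' T) ≤
      ENNReal.ofReal (Real.exp (Δ₁ / b)) * laplaceMeasure b ((Y ω' + ·) ⁻¹' T) :=
    fun ω ω' hVω => (laplaceMeasure_preimage_const_add_le hbpos.le hT _ _).trans <| by
      gcongr
      exact hsens ω ω' hVω
  rw [Measure.conv_map_apply hY hT, Measure.conv_map_apply hY hT]
  calc _ ≤ ENNReal.ofReal (Real.exp (Δ₁ / b)) * ENNReal.ofReal (Real.exp lam) * _ :=
        lintegral_le_mul_of_fiberwise_le_mul hV (by positivity) ENNReal.ofReal_ne_top hosc hratio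
    _ ≤ ENNReal.ofReal (Real.exp ε) * _ := by
        rw [← ENNReal.ofReal_mul (Real.exp_nonneg _), ← Real.exp_add]
        gcongr
        linarith

/-- abstract privacy proof of the Attribute-Private Markov Quilt
Mechanism. `Y` is the query value, `E` the secret event, `V` the auxiliary (quilt)
variable. `Y` is determined by `V` up to sensitivity `Δ₁`, the likelihood ratio of `V`
between `E` and `Eᶜ` is bounded by `e^λ` (max-influence), and independent Laplace noise
`Z ~ Lap(b)` with `b ≥ Δ₁/(ε - λ)` is added; then the output distributions conditioned
on `E` and `Eᶜ` satisfy `P(Y + Z ∈ T | E) ≤ e^ε P(Y + Z ∈ T | Eᶜ)`. (Independence of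
`Z` from `(Y, E)` is expressed by convolving the conditional law of `Y` with the
Laplace measure.) -/
theorem markov_quilt_privacy
    {Ω α : Type*} [MeasurableSpace Ω] [MeasurableSpace α] [Countable α]
    [MeasurableSingletonClass α]
    (P : Measure Ω) [IsProbabilityMeasure P]
    (Y : Ω → ℝ) (hY : Measurable Y) (V : Ω → α) (hV : Measurable V)
    (E : Set Ω) (hE : MeasurableSet E)
    (hEpos : P E ≠ 0) (hEcpos : P Eᶜ ≠ 0)
    (Δ₁ lam ε b : ℝ) (hΔ₁ : 0 ≤ Δ₁) (hlam : 0 ≤ lam) (hlamε : lam < ε)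
    (hb : b ≥ Δ₁ / (ε - lam)) (hbpos : 0 < b)
    (hsens : ∀ ω ω', V ω = V ω' → |Y ω - Y ω'| ≤ Δ₁)
    (hratio : ∀ v : α, P[|E] (V ⁻¹' {v}) ≤
      ENNReal.ofReal (Real.exp lam) * P[|Eᶜ] (V ⁻¹' {v})) :
    ∀ T : Set ℝ, MeasurableSet T →
      (Measure.conv ((P[|E]).map Y) (laplaceMeasure b)) T ≤
        ENNReal.ofReal (Real.exp ε) *
          (Measure.conv ((P[|Eᶜ]).map Y) (laplaceMeasure b)) T :=
  markov_quilt_privacy_general P Y hY V hV E Δ₁ lam ε b hlamε hb hbpos hsens hratio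
end

section
/- Let σ² ≥ 2 log(1.25/δ) (Δ/ε)² with 0 < ε ≤ 1 and Z ~ N(0, σ²). Define the privacy loss L(z) = log(f(z)/f(z + Δ)) = (2zΔ + Δ²)/(2σ²), where f is the density of N(0,σ²). Then P(|L(Z)| > ε) ≤ δ. -/
/-!
The privacy loss exceeds `ε` exactly when `|Z + Δ/2| > t := εσ²/Δ`, so for `X ~ N(Δ/2, σ²)` the
probability is at most `P(X > t) + P(X > Δ + t)`. Comparing the density of `N(μ, σ²)` with that
of `N(μ + s, σ²)` gives the tail bound `P(X > μ + s) ≤ e^{-s²/2σ²}/2` for `s ≥ 0`; when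
`t ≥ Δ/2` the two tails sum to `e^{-(t² + Δ²/4)/2σ²} cosh(ε/2) ≤ 1.25 e^{-t²/2σ²}`, which is at
most `δ` by the calibration. If instead `t < Δ/2`, then `ε ≤ 1` forces `t² < σ²/2`, hence
`δ ≥ 20/21`, while `δ < 1` forces `t² ≥ 2σ²/5`; the mass between `t` and the mean is then below
`0.064`, which leaves enough room.
-/

open MeasureTheory ProbabilityTheory Real Set NNReal ENNReal

namespace ProbabilityTheory

lemma gaussianReal_Iio_eq_Ioi (μ : ℝ) (v : ℝ≥0) (t : ℝ) :
    gaussianReal μ v (Iio t) = gaussianReal μ v (Ioi (2 * μ - t)) := by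
  have hrefl := gaussianReal_map_const_sub (μ := μ) (v := v) (2 * μ)
  rw [two_mul, add_sub_cancel_right] at hrefl
  rw [← hrefl, Measure.map_apply (by fun_prop) measurableSet_Ioi]
  congr 1
  ext x
  simp only [mem_Iio, mem_preimage, mem_Ioi]
  constructor <;> intro <;> linarith

lemma gaussianReal_Ioi_self (μ : ℝ) {v : ℝ≥0} (hv : v ≠ 0) : gaussianReal μ v (Ioi μ) = 2⁻¹ := by
  have := nullSingletonClass_gaussianReal (μ := μ) hv
  have hsum : gaussianReal μ v (Iio μ) + gaussianReal μ v (Ioi μ) = 1 := by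
    rw [← measure_union Iio_disjoint_Ioi_same measurableSet_Ioi, Iio_union_Ioi,
      prob_compl_eq_one_sub (measurableSet_singleton μ), measure_singleton, tsub_zero]
  rw [gaussianReal_Iio_eq_Ioi, two_mul, add_sub_cancel_right, ← two_mul] at hsum
  exact ENNReal.eq_inv_of_mul_eq_one_left (by rwa [mul_comm])

lemma gaussianPDFReal_le_exp_mul_gaussianPDFReal {μ t x : ℝ} {v : ℝ≥0} (ht : μ ≤ t) (hx : t ≤ x) :
    gaussianPDFReal μ v x ≤ exp (-((t - μ) ^ 2 / (2 * v))) * gaussianPDFReal t v x := by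
  rw [gaussianPDFReal_def, gaussianPDFReal_def, mul_left_comm, ← exp_add]
  refine mul_le_mul_of_nonneg_left (exp_le_exp.2 ?_) (by positivity)
  simp only [neg_div, ← neg_add, ← add_div, neg_le_neg_iff]
  gcongr
  nlinarith [mul_nonneg (sub_nonneg.2 ht) (sub_nonneg.2 hx)]

lemma gaussianReal_Ioi_le_exp_neg_sq {μ t : ℝ} {v : ℝ≥0} (hv : v ≠ 0) (ht : μ ≤ t) :
    gaussianReal μ v (Ioi t) ≤ ENNReal.ofReal (exp (-((t - μ) ^ 2 / (2 * v))) / 2) := by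
  set c := exp (-((t - μ) ^ 2 / (2 * v)))
  calc gaussianReal μ v (Ioi t)
      = ∫⁻ x in Ioi t, gaussianPDF μ v x := gaussianReal_apply μ hv _
    _ ≤ ∫⁻ x in Ioi t, ENNReal.ofReal c * gaussianPDF t v x := by
        refine setLIntegral_mono (by fun_prop) fun x hx ↦ ?_
        rw [gaussianPDF, gaussianPDF, ← ENNReal.ofReal_mul (exp_pos _).le]
        exact ENNReal.ofReal_le_ofReal
          (gaussianPDFReal_le_exp_mul_gaussianPDFReal ht hx.le)
    _ = ENNReal.ofReal c * gaussianReal t v (Ioi t) := by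
        rw [lintegral_const_mul _ (measurable_gaussianPDF t v), gaussianReal_apply t hv]
    _ = ENNReal.ofReal (c / 2) := by
        rw [gaussianReal_Ioi_self t hv, ENNReal.ofReal_div_of_pos two_pos, ENNReal.ofReal_ofNat,
          div_eq_mul_inv]

lemma gaussianPDFReal_le_inv_sqrt (μ : ℝ) (v : ℝ≥0) (x : ℝ) :
    gaussianPDFReal μ v x ≤ (√(2 * π * v))⁻¹ := by
  rw [gaussianPDFReal_def]
  refine mul_le_of_le_one_right (by positivity) (exp_le_one_iff.2 ?_)
  rw [neg_div]
  exact neg_nonpos.2 (by positivity)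

lemma gaussianReal_Ioi_le_half_add {μ t : ℝ} {v : ℝ≥0} (hv : v ≠ 0) (ht : t ≤ μ) :
    gaussianReal μ v (Ioi t) ≤ ENNReal.ofReal (1 / 2 + (μ - t) / √(2 * π * v)) := by
  have hmiddle : gaussianReal μ v (Ioc t μ) ≤ ENNReal.ofReal ((μ - t) / √(2 * π * v)) := by
    calc gaussianReal μ v (Ioc t μ)
        = ∫⁻ x in Ioc t μ, gaussianPDF μ v x := gaussianReal_apply μ hv _
      _ ≤ ∫⁻ _ in Ioc t μ, ENNReal.ofReal (√(2 * π * v))⁻¹ :=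
          setLIntegral_mono measurable_const fun x _ ↦
            ENNReal.ofReal_le_ofReal (gaussianPDFReal_le_inv_sqrt μ v x)
      _ = ENNReal.ofReal ((μ - t) / √(2 * π * v)) := by
          rw [setLIntegral_const, Real.volume_Ioc, ← ENNReal.ofReal_mul (by positivity),
            div_eq_inv_mul]
  calc gaussianReal μ v (Ioi t)
      ≤ gaussianReal μ v (Ioc t μ) + gaussianReal μ v (Ioi μ) := by
        rw [← Ioc_union_Ioi_eq_Ioi ht]
        exact measure_union_le _ _
    _ ≤ ENNReal.ofReal ((μ - t) / √(2 * π * v)) + ENNReal.ofReal (1 / 2) := by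
        rw [gaussianReal_Ioi_self μ hv, one_div, ENNReal.ofReal_inv_of_pos two_pos,
          ENNReal.ofReal_ofNat]
        gcongr
    _ = ENNReal.ofReal (1 / 2 + (μ - t) / √(2 * π * v)) := by
        rw [add_comm, ENNReal.ofReal_add (by norm_num) (by positivity)]

lemma gaussianReal_lt_abs_le_add (μ : ℝ) (v : ℝ≥0) (t : ℝ) :
    gaussianReal μ v {x | t < |x|} ≤
      gaussianReal μ v (Ioi t) + gaussianReal μ v (Ioi (2 * μ + t)) := by
  have hsplit : {x : ℝ | t < |x|} = Ioi t ∪ Iio (-t) := by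
    ext x
    simp only [mem_ofPred_eq, lt_abs, mem_union, mem_Ioi, mem_Iio, lt_neg]
  rw [hsplit, ← sub_neg_eq_add, ← gaussianReal_Iio_eq_Ioi]
  exact measure_union_le _ _

end ProbabilityTheory

namespace Real

lemma exp_le_one_add_add_sq {x : ℝ} (hx : |x| ≤ 1) : exp x ≤ 1 + x + x ^ 2 := by
  linarith [(abs_le.1 (abs_exp_sub_one_sub_id_le hx)).2]

lemma cosh_le_five_div_four {x : ℝ} (hx : |x| ≤ 1 / 2) : cosh x ≤ 5 / 4 :=
  calc cosh x ≤ cosh (1 / 2) := cosh_le_cosh.2 (by rwa [abs_of_pos (by norm_num : (0 : ℝ) < 1 / 2)])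
    _ ≤ exp ((1 / 2) ^ 2 / 2) := cosh_le_exp_half_sq _
    _ ≤ 5 / 4 := by
        refine (exp_le_one_add_add_sq (by norm_num [abs_of_pos])).trans ?_
        norm_num

lemma mul_exp_neg_le_of_log_div_le {c δ x : ℝ} (hc : 0 < c) (hδ : 0 < δ)
    (h : log (c / δ) ≤ x) : c * exp (-x) ≤ δ := by
  have := (log_le_iff_le_exp (by positivity)).1 h
  rw [div_le_iff₀ hδ] at this
  calc c * exp (-x) ≤ exp x * δ * exp (-x) := by gcongr
    _ = δ := by rw [mul_right_comm, ← exp_add, add_neg_cancel, exp_zero, one_mul]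

end Real

lemma half_exp_neg_sub_sq_add_half_exp_neg_add_sq (t m v : ℝ) :
    exp (-((t - m) ^ 2 / (2 * v))) / 2 + exp (-((t + m) ^ 2 / (2 * v))) / 2 =
      exp (-((t ^ 2 + m ^ 2) / (2 * v))) * cosh (t * m / v) := by
  have hsub : -((t - m) ^ 2 / (2 * v)) = -((t ^ 2 + m ^ 2) / (2 * v)) + t * m / v := by ring
  have hadd : -((t + m) ^ 2 / (2 * v)) = -((t ^ 2 + m ^ 2) / (2 * v)) + -(t * m / v) := by ring
  rw [hsub, hadd, exp_add, exp_add, cosh_eq]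
  ring

lemma half_exp_neg_sub_sq_add_half_exp_neg_add_sq_le {t m v δ : ℝ} (hv : 0 ≤ v)
    (htm : |t * m / v| ≤ 1 / 2) (hδ : 5 / 4 * exp (-(t ^ 2 / (2 * v))) ≤ δ) :
    exp (-((t - m) ^ 2 / (2 * v))) / 2 + exp (-((t + m) ^ 2 / (2 * v))) / 2 ≤ δ := by
  rw [half_exp_neg_sub_sq_add_half_exp_neg_add_sq]
  calc exp (-((t ^ 2 + m ^ 2) / (2 * v))) * cosh (t * m / v)
      ≤ exp (-(t ^ 2 / (2 * v))) * (5 / 4) := by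
        gcongr
        · linarith [sq_nonneg m]
        · exact cosh_le_five_div_four htm
    _ ≤ δ := by linarith

lemma sub_div_sqrt_two_pi_mul_le {t m v : ℝ} (hv : 0 < v) (ht : 0 < t)
    (ht_sq : 2 / 5 * v ≤ t ^ 2) (htm : t * m ≤ v / 2) : (m - t) / √(2 * π * v) ≤ 8 / 125 := by
  set s := √v with hs
  have hs_pos : 0 < s := sqrt_pos.2 hv
  have hv_eq : v = s ^ 2 := (sq_sqrt hv.le).symm
  rw [hv_eq] at ht_sq htm
  have ht_ge : 5 / 8 * s ≤ t := by nlinarith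
  have hgap : m - t ≤ 4 / 25 * s := by
    refine le_of_mul_le_mul_left ?_ ht
    nlinarith [mul_le_mul_of_nonneg_right ht_ge hs_pos.le]
  have hsqrt : 5 / 2 * s ≤ √(2 * π * v) := by
    rw [sqrt_mul (by positivity), ← hs]
    gcongr
    rw [le_sqrt (by norm_num) (by positivity)]
    nlinarith [pi_gt_d2]
  rw [div_le_iff₀ (by positivity)]
  nlinarith

lemma half_add_div_sqrt_add_half_exp_neg_add_sq_le {t m v δ : ℝ} (hv : 0 < v) (ht : 0 < t)
    (htm : t < m) (htmv : t * m / v ≤ 1 / 2) (hδ : 5 / 4 * exp (-(t ^ 2 / (2 * v))) ≤ δ)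
    (hδ1 : δ < 1) :
    1 / 2 + (m - t) / √(2 * π * v) + exp (-((t + m) ^ 2 / (2 * v))) / 2 ≤ δ := by
  set q := t ^ 2 / (2 * v) with hq
  rw [div_le_iff₀ hv] at htmv
  have hq_lt : q < 1 / 4 := by
    rw [hq, div_lt_iff₀ (by positivity)]
    nlinarith
  have hexp_quarter : 16 / 21 ≤ exp (-(1 / 4)) := by
    rw [exp_neg, le_inv_comm₀ (by norm_num) (exp_pos _)]
    linarith [exp_le_one_add_add_sq (x := 1 / 4) (by norm_num [abs_of_pos])]
  have hδ_ge : 20 / 21 ≤ δ := by linarith [exp_le_exp.2 (by linarith : -(1 / 4) ≤ -q)]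
  have hq_ge : 1 / 5 ≤ q := by
    have h : 5 / 4 < exp q := by
      rw [exp_neg, ← div_eq_mul_inv, div_le_iff₀ (exp_pos q)] at hδ
      nlinarith [exp_pos q]
    linarith [(log_lt_iff_lt_exp (by norm_num)).2 h, one_sub_inv_le_log_of_pos (x := 5 / 4)
      (by norm_num)]
  have hmid := sub_div_sqrt_two_pi_mul_le (m := m) hv ht
    (by rw [hq, le_div_iff₀ (by positivity)] at hq_ge; linarith) (by linarith)
  have htail : exp (-((t + m) ^ 2 / (2 * v))) ≤ exp (-q) :=
    exp_le_exp.2 (neg_le_neg (div_le_div_of_nonneg_right (by nlinarith) (by positivity)))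
  linarith

lemma gaussianReal_lt_abs_privacyLoss_eq (v : ℝ≥0) (hv : (0 : ℝ) < v) {Δ : ℝ} (hΔ : 0 < Δ)
    (ε : ℝ) :
    gaussianReal 0 v {z : ℝ | ε < |(2 * z * Δ + Δ ^ 2) / (2 * (v : ℝ))|} =
      gaussianReal (Δ / 2) v {x | ε * v / Δ < |x|} := by
  rw [← zero_add (Δ / 2), ← gaussianReal_map_add_const,
    Measure.map_apply (by fun_prop) (measurableSet_lt measurable_const (by fun_prop))]
  congr 1
  ext z
  have hloss : (2 * z * Δ + Δ ^ 2) / (2 * (v : ℝ)) = Δ / v * (z + Δ / 2) := by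
    field_simp
  simp only [mem_preimage, mem_ofPred_eq]
  rw [hloss, abs_mul, abs_of_pos (by positivity), div_mul_eq_mul_div, lt_div_iff₀ hv,
    div_lt_iff₀' hΔ]

/-- privacy loss tail bound for the Gaussian mechanism: with
`Z ~ N(0, σ²)` and privacy loss `L(z) = (2zΔ + Δ²)/(2σ²)`, if
`σ² ≥ 2 log(1.25/δ) (Δ/ε)²` with `0 < ε ≤ 1`, then `P(|L(Z)| > ε) ≤ δ`. -/
theorem gaussian_privacy_loss_tail
    (σ2 : NNReal) (hσ : (0 : ℝ) < σ2)
    (Δ ε δ : ℝ) (hΔ : 0 < Δ) (hε : 0 < ε) (hε1 : ε ≤ 1) (hδ : 0 < δ)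
    (hcal : (σ2 : ℝ) ≥ 2 * Real.log (1.25 / δ) * (Δ / ε) ^ 2) :
    gaussianReal 0 σ2 {z : ℝ | ε < |(2 * z * Δ + Δ ^ 2) / (2 * (σ2 : ℝ))|} ≤
      ENNReal.ofReal δ := by
  rcases le_or_gt 1 δ with hδ1 | hδ1
  · exact prob_le_one.trans (ENNReal.ofReal_one ▸ ENNReal.ofReal_le_ofReal hδ1)
  have hv : σ2 ≠ 0 := (NNReal.coe_pos.1 hσ).ne'
  set t := ε * σ2 / Δ
  set m := Δ / 2
  have ht : 0 < t := by positivity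
  have hm : 0 < m := by positivity
  have htm : t * m / σ2 = ε / 2 := by simp only [t, m]; field_simp
  have hδt : 5 / 4 * exp (-(t ^ 2 / (2 * σ2))) ≤ δ := by
    refine mul_exp_neg_le_of_log_div_le (by norm_num) hδ ?_
    rw [show t ^ 2 / (2 * σ2) = σ2 / (2 * (Δ / ε) ^ 2) by simp only [t]; field_simp,
      le_div_iff₀ (by positivity)]
    norm_num at hcal ⊢
    linarith
  rw [gaussianReal_lt_abs_privacyLoss_eq σ2 hσ hΔ ε]
  refine (gaussianReal_lt_abs_le_add m σ2 t).trans ?_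
  have hleft : gaussianReal m σ2 (Ioi (2 * m + t)) ≤
      ENNReal.ofReal (exp (-((t + m) ^ 2 / (2 * σ2))) / 2) := by
    simpa [show 2 * m + t - m = t + m by ring] using
      gaussianReal_Ioi_le_exp_neg_sq hv (by linarith : m ≤ 2 * m + t)
  rcases le_or_gt m t with hmt | hmt
  · calc _ ≤ _ := add_le_add (gaussianReal_Ioi_le_exp_neg_sq hv hmt) hleft
      _ = _ := (ENNReal.ofReal_add (by positivity) (by positivity)).symm
      _ ≤ _ := ENNReal.ofReal_le_ofReal <| half_exp_neg_sub_sq_add_half_exp_neg_add_sq_le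
          σ2.2 (by rw [htm, abs_of_pos (by positivity)]; linarith) hδt
  · calc _ ≤ _ := add_le_add (gaussianReal_Ioi_le_half_add hv hmt.le) hleft
      _ = _ := (ENNReal.ofReal_add (add_nonneg (by norm_num)
          (div_nonneg (by linarith) (sqrt_nonneg _))) (by positivity)).symm
      _ ≤ _ := ENNReal.ofReal_le_ofReal <| half_add_div_sqrt_add_half_exp_neg_add_sq_le
          (by positivity) ht hmt (by rw [htm]; linarith) hδt hδ1
end
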